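/- arXiv:1401.6850 — 5 statements merged into one kernel-verified Lean document; each statement's English description precedes it below -/
import Mathlib

section
/- For all real numbers x, y and all p with 0 < p ≤ 2, |x^2 - y^2|^(p/2) ≤ max(1, 2^((p-1)/2)) * sqrt((|x|^p + |y|^p) * |x - y|^p). -/
/-! Factor |x² - y²| = |x + y| |x - y|, so that |x² - y²|^(p/2) = √(|x + y|^p |x - y|^p). The
generalized triangle inequality |x + y|^p ≤ max 1 2^(p-1) (|x|^p + |y|^p) (subadditivity of t ↦ t^p
for p ≤ 1, convexity for p ≥ 1) bounds this by √(max 1 2^(p-1)) √((|x|^p + |y|^p) |x - y|^p), and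
√(max 1 2^(p-1)) = max 1 2^((p-1)/2). -/

namespace Real

theorem add_rpow_le_max_mul_add_rpow {a b p : ℝ} (ha : 0 ≤ a) (hb : 0 ≤ b) (hp : 0 ≤ p) :
    (a + b) ^ p ≤ max 1 ((2 : ℝ) ^ (p - 1)) * (a ^ p + b ^ p) := by
  have hsum : 0 ≤ a ^ p + b ^ p := by positivity
  rcases le_total p 1 with hp1 | hp1
  · calc (a + b) ^ p ≤ a ^ p + b ^ p := rpow_add_le_add_rpow ha hb hp hp1
      _ ≤ _ := le_mul_of_one_le_left hsum (le_max_left _ _)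
  · calc (a + b) ^ p ≤ (2 : ℝ) ^ (p - 1) * (a ^ p + b ^ p) := by
          lift a to NNReal using ha
          lift b to NNReal using hb
          exact_mod_cast NNReal.rpow_add_le_mul_rpow_add_rpow a b hp1
      _ ≤ _ := mul_le_mul_of_nonneg_right (le_max_right _ _) hsum

theorem abs_add_rpow_le_max_mul_add_rpow (x y : ℝ) {p : ℝ} (hp : 0 ≤ p) :
    |x + y| ^ p ≤ max 1 ((2 : ℝ) ^ (p - 1)) * (|x| ^ p + |y| ^ p) :=
  (rpow_le_rpow (abs_nonneg _) (abs_add_le x y) hp).trans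
    (add_rpow_le_max_mul_add_rpow (abs_nonneg x) (abs_nonneg y) hp)

theorem abs_sq_sub_sq_rpow_half (x y p : ℝ) :
    |x ^ 2 - y ^ 2| ^ (p / 2) = √(|x + y| ^ p * |x - y| ^ p) := by
  rw [sq_sub_sq, abs_mul, ← mul_rpow (abs_nonneg _) (abs_nonneg _), sqrt_eq_rpow,
    ← rpow_mul (by positivity), mul_one_div]

theorem sqrt_max_one_two_rpow (q : ℝ) :
    √(max 1 ((2 : ℝ) ^ q)) = max 1 ((2 : ℝ) ^ (q / 2)) := by
  rw [sqrt_eq_rpow, rpow_max zero_le_one (by positivity) (by norm_num), one_rpow,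
    ← rpow_mul zero_le_two, mul_one_div]

end Real

theorem stmt2_general (x y p : ℝ) (hp0 : 0 < p) :
    |x ^ 2 - y ^ 2| ^ (p / 2) ≤
      max 1 ((2 : ℝ) ^ ((p - 1) / 2)) *
        Real.sqrt ((|x| ^ p + |y| ^ p) * |x - y| ^ p) := by
  rw [Real.abs_sq_sub_sq_rpow_half, ← Real.sqrt_max_one_two_rpow, ← Real.sqrt_mul (by positivity),
    ← mul_assoc]
  exact Real.sqrt_le_sqrt <| mul_le_mul_of_nonneg_right
    (Real.abs_add_rpow_le_max_mul_add_rpow x y hp0.le) (by positivity)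

theorem stmt2 (x y p : ℝ) (hp0 : 0 < p) (hp2 : p ≤ 2) :
    |x ^ 2 - y ^ 2| ^ (p / 2) ≤
      max 1 ((2 : ℝ) ^ ((p - 1) / 2)) *
        Real.sqrt ((|x| ^ p + |y| ^ p) * |x - y| ^ p) :=
  stmt2_general x y p hp0
end

section
/- Let 0 < p ≤ q, λ ∈ [0,1], and f, g ∈ L^p ∩ L^q on ℝ^d. Define H_r(f,g) = sqrt((‖f‖_r^r + ‖g‖_r^r) ‖f-g‖_r^r). Then H_{λp + (1-λ)q}(f, g) ≤ sqrt(λ) H_p(f, g) + sqrt(1-λ) H_q(f, g). -/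
/-!
For fixed `a ≥ 0` the map `r ↦ a ^ r` is convex on `r > 0`. Writing the product
`(‖f‖_r^r + ‖g‖_r^r) ‖f - g‖_r^r` as the integral of `(|f x| |h y|) ^ r + (|g x| |h y|) ^ r`
over the product space (with `h = f - g`), this convexity gives
`H_s(f, g)^2 ≤ λ H_p(f, g)^2 + (1 - λ) H_q(f, g)^2` for `s = λ p + (1 - λ) q`, and the
subadditivity of the square root finishes the proof.
-/

open MeasureTheory

lemma Real.rpow_convexComb_exponent_le {a p q lam : ℝ} (ha : 0 ≤ a) (hp : 0 < p) (hq : 0 < q)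
    (hl0 : 0 ≤ lam) (hl1 : lam ≤ 1) :
    a ^ (lam * p + (1 - lam) * q) ≤ lam * a ^ p + (1 - lam) * a ^ q := by
  rcases ha.eq_or_lt with rfl | ha
  · have hs : 0 < lam * p + (1 - lam) * q := by
      linarith [mul_le_mul_of_nonneg_left (min_le_left p q) hl0,
        mul_le_mul_of_nonneg_left (min_le_right p q) (sub_nonneg.2 hl1), lt_min hp hq]
    simp [Real.zero_rpow hs.ne', hp.ne', hq.ne']
  · exact (convexOn_rpow_left ha).2 trivial trivial hl0 (sub_nonneg.2 hl1) (by ring)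

lemma Real.sqrt_add_le_sqrt_add_sqrt (a b : ℝ) : √(a + b) ≤ √a + √b :=
  Real.sqrt_le_iff.2 ⟨by positivity, by
    nlinarith [Real.sq_sqrt' (x := a), Real.sq_sqrt' (x := b), le_max_left a 0, le_max_left b 0,
      mul_nonneg (Real.sqrt_nonneg a) (Real.sqrt_nonneg b)]⟩

lemma Real.sqrt_convexComb_le {x y lam : ℝ} (hl0 : 0 ≤ lam) (hl1 : lam ≤ 1) :
    √(lam * x + (1 - lam) * y) ≤ √lam * √x + √(1 - lam) * √y := by
  rw [← Real.sqrt_mul hl0, ← Real.sqrt_mul (sub_nonneg.2 hl1)]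
  exact Real.sqrt_add_le_sqrt_add_sqrt _ _

lemma integrable_abs_sub_rpow {α : Type*} [MeasurableSpace α] {μ : Measure α} {f g : α → ℝ}
    (hf : AEStronglyMeasurable f μ) (hg : AEStronglyMeasurable g μ) {p : ℝ} (hp : 0 < p)
    (hfp : Integrable (fun x => |f x| ^ p) μ) (hgp : Integrable (fun x => |g x| ^ p) μ) :
    Integrable (fun x => |f x - g x| ^ p) μ := by
  have hp' : (ENNReal.ofReal p).toReal = p := ENNReal.toReal_ofReal hp.le
  have integrable_iff_memLp {u : α → ℝ} (hu : AEStronglyMeasurable u μ) :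
      Integrable (fun x => |u x| ^ p) μ ↔ MemLp u (ENNReal.ofReal p) μ := by
    simpa [hp'] using integrable_norm_rpow_iff hu
      (ENNReal.ofReal_pos.2 hp).ne' ENNReal.ofReal_ne_top
  exact (integrable_iff_memLp (hf.sub hg)).2
    (((integrable_iff_memLp hf).1 hfp).sub ((integrable_iff_memLp hg).1 hgp))

lemma integral_rpow_mul_integral_rpow_le {α β : Type*} [MeasurableSpace α] [MeasurableSpace β]
    {μ : Measure α} {ν : Measure β} [SFinite μ] [SFinite ν] {u : α → ℝ} {v : β → ℝ}
    {p q lam : ℝ} (hp : 0 < p) (hq : 0 < q) (hl0 : 0 ≤ lam) (hl1 : lam ≤ 1)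
    (hup : Integrable (fun x => |u x| ^ p) μ) (huq : Integrable (fun x => |u x| ^ q) μ)
    (hvp : Integrable (fun y => |v y| ^ p) ν) (hvq : Integrable (fun y => |v y| ^ q) ν) :
    (∫ x, |u x| ^ (lam * p + (1 - lam) * q) ∂μ) * ∫ y, |v y| ^ (lam * p + (1 - lam) * q) ∂ν ≤
      lam * ((∫ x, |u x| ^ p ∂μ) * ∫ y, |v y| ^ p ∂ν) +
        (1 - lam) * ((∫ x, |u x| ^ q ∂μ) * ∫ y, |v y| ^ q ∂ν) := by
  simp only [← integral_prod_mul (μ := μ) (ν := ν), ← integral_const_mul]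
  have hip := (hup.mul_prod hvp).const_mul lam
  have hiq := (huq.mul_prod hvq).const_mul (1 - lam)
  rw [← integral_add hip hiq]
  refine integral_mono_of_nonneg (ae_of_all _ fun z => by positivity) (hip.add hiq)
    (ae_of_all _ fun z => ?_)
  have hz := Real.rpow_convexComb_exponent_le
    (mul_nonneg (abs_nonneg (u z.1)) (abs_nonneg (v z.2))) hp hq hl0 hl1
  simp only [Real.mul_rpow (abs_nonneg _) (abs_nonneg _)] at hz
  simpa only [Pi.add_apply, mul_assoc] using hz

theorem stmt4 (d : ℕ) (p q lam : ℝ) (hp : 0 < p) (hpq : p ≤ q)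
    (hl0 : 0 ≤ lam) (hl1 : lam ≤ 1)
    (f g : EuclideanSpace ℝ (Fin d) → ℝ)
    (hf : Measurable f) (hg : Measurable g)
    (hfp : Integrable (fun r => |f r| ^ p)) (hfq : Integrable (fun r => |f r| ^ q))
    (hgp : Integrable (fun r => |g r| ^ p)) (hgq : Integrable (fun r => |g r| ^ q)) :
    Real.sqrt (((∫ r, |f r| ^ (lam * p + (1 - lam) * q)) +
          ∫ r, |g r| ^ (lam * p + (1 - lam) * q)) *
        ∫ r, |f r - g r| ^ (lam * p + (1 - lam) * q)) ≤
      Real.sqrt lam *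
          Real.sqrt (((∫ r, |f r| ^ p) + ∫ r, |g r| ^ p) * ∫ r, |f r - g r| ^ p) +
        Real.sqrt (1 - lam) *
          Real.sqrt (((∫ r, |f r| ^ q) + ∫ r, |g r| ^ q) * ∫ r, |f r - g r| ^ q) := by
  have hq : 0 < q := hp.trans_le hpq
  have hdp := integrable_abs_sub_rpow hf.aestronglyMeasurable hg.aestronglyMeasurable hp hfp hgp
  have hdq := integrable_abs_sub_rpow hf.aestronglyMeasurable hg.aestronglyMeasurable hq hfq hgq
  have hf_bound := integral_rpow_mul_integral_rpow_le hp hq hl0 hl1 hfp hfq hdp hdq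
  have hg_bound := integral_rpow_mul_integral_rpow_le hp hq hl0 hl1 hgp hgq hdp hdq
  refine (Real.sqrt_le_sqrt ?_).trans (Real.sqrt_convexComb_le hl0 hl1)
  rw [add_mul]
  linarith
end

section
/- Let V be a symmetric Lévy measure with μ_p^∞(V) = ∫_{|a|≥1}|a|^p V(da) < ∞ and μ_q^0(V) = ∫_{0<|a|<1}|a|^q V(da) < ∞ for some 0 < p ≤ q ≤ 2. Then g(ω) = ∫ (cos(ωa) - 1) V(da) satisfies |g(ω₂) - g(ω₁)| ≤ κ₁ h_p(ω₁,ω₂) + κ₂ h_q(ω₁,ω₂) for all ω₁, ω₂ ∈ ℝ, where h_r(x,y) = sqrt((|x|^r + |y|^r)|x-y|^r) and κ₁, κ₂ are constants depending only on p, q, V. -/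
open MeasureTheory

lemma my_sin_bound {r : ℝ} (hr : 0 < r) (hr2 : r ≤ 2) (x : ℝ) :
    |Real.sin x| ≤ |x| ^ (r / 2) := by
  rcases eq_or_ne x 0 with rfl | hx
  · simp only [Real.sin_zero, abs_zero]
    positivity
  have hx0 : 0 < |x| := abs_pos.mpr hx
  rcases le_or_gt (|x|) 1 with h | h
  · calc |Real.sin x| ≤ |x| := Real.abs_sin_le_abs
    _ = |x| ^ (1 : ℝ) := (Real.rpow_one _).symm
    _ ≤ |x| ^ (r / 2) := Real.rpow_le_rpow_of_exponent_ge hx0 h (by linarith)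
  · calc |Real.sin x| ≤ 1 := Real.abs_sin_le_one x
    _ ≤ |x| ^ (r / 2) := Real.one_le_rpow h.le (by positivity)

lemma my_hrw {r : ℝ} (y : ℝ) (hy : 0 ≤ y) : Real.sqrt (y ^ r) = y ^ (r / 2) := by
  rw [Real.sqrt_eq_rpow, ← Real.rpow_mul hy, mul_one_div]

lemma my_key {r : ℝ} (hr : 0 < r) (hr2 : r ≤ 2) (ω₁ ω₂ a : ℝ) :
    |Real.cos (ω₂ * a) - Real.cos (ω₁ * a)| ≤
      |a| ^ r * (2 * Real.sqrt ((|ω₁| ^ r + |ω₂| ^ r) * |ω₁ - ω₂| ^ r)) := by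
  have h1 : Real.cos (ω₂ * a) - Real.cos (ω₁ * a) =
      -2 * Real.sin ((ω₂ * a + ω₁ * a) / 2) * Real.sin ((ω₂ * a - ω₁ * a) / 2) :=
    Real.cos_sub_cos _ _
  have e1 : (ω₂ * a + ω₁ * a) / 2 = ((ω₂ + ω₁) / 2) * a := by ring
  have e2 : (ω₂ * a - ω₁ * a) / 2 = ((ω₂ - ω₁) / 2) * a := by ring
  rw [h1, e1, e2, abs_mul, abs_mul]
  have b1 : |Real.sin ((ω₂ + ω₁) / 2 * a)| ≤ (|(ω₂ + ω₁) / 2| * |a|) ^ (r / 2) := by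
    simpa [abs_mul] using my_sin_bound hr hr2 ((ω₂ + ω₁) / 2 * a)
  have b2 : |Real.sin ((ω₂ - ω₁) / 2 * a)| ≤ (|(ω₂ - ω₁) / 2| * |a|) ^ (r / 2) := by
    simpa [abs_mul] using my_sin_bound hr hr2 ((ω₂ - ω₁) / 2 * a)
  have habs : |(-2 : ℝ)| = 2 := by norm_num
  rw [habs]
  have step1 : 2 * |Real.sin ((ω₂ + ω₁) / 2 * a)| * |Real.sin ((ω₂ - ω₁) / 2 * a)|
      ≤ 2 * ((|(ω₂ + ω₁) / 2| * |a|) ^ (r / 2)) * ((|(ω₂ - ω₁) / 2| * |a|) ^ (r / 2)) := by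
    gcongr
  refine step1.trans ?_
  have step2 : 2 * ((|(ω₂ + ω₁) / 2| * |a|) ^ (r / 2)) * ((|(ω₂ - ω₁) / 2| * |a|) ^ (r / 2))
      = |a| ^ r * (2 * (|(ω₂ + ω₁) / 2| ^ (r / 2) * |(ω₂ - ω₁) / 2| ^ (r / 2))) := by
    rw [Real.mul_rpow (abs_nonneg _) (abs_nonneg _),
      Real.mul_rpow (abs_nonneg _) (abs_nonneg _)]
    rw [show |a| ^ r = |a| ^ (r / 2) * |a| ^ (r / 2) from by
      rw [← Real.rpow_add' (abs_nonneg _) (by linarith)]; ring_nf]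
    ring
  rw [step2]
  gcongr _ * (_ * ?_)
  -- |(ω₂+ω₁)/2|^(r/2) * |(ω₂-ω₁)/2|^(r/2) ≤ sqrt ((|ω₁|^r+|ω₂|^r) * |ω₁-ω₂|^r)
  have hM : |(ω₂ + ω₁) / 2| ≤ max |ω₁| |ω₂| := by
    have h2 : |ω₂ + ω₁| ≤ |ω₁| + |ω₂| := (abs_add_le _ _).trans_eq (add_comm _ _)
    have h3 := le_max_left |ω₁| |ω₂|
    have h4 := le_max_right |ω₁| |ω₂|
    rw [abs_div, abs_two, div_le_iff₀ (by norm_num : (0:ℝ) < 2)]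
    linarith
  have hMr : (max |ω₁| |ω₂|) ^ r ≤ |ω₁| ^ r + |ω₂| ^ r := by
    have n1 := Real.rpow_nonneg (abs_nonneg ω₁) r
    have n2 := Real.rpow_nonneg (abs_nonneg ω₂) r
    rcases max_cases |ω₁| |ω₂| with ⟨he, _⟩ | ⟨he, _⟩ <;> rw [he] <;> linarith
  rw [Real.sqrt_mul (by positivity)]
  have t1 : |(ω₂ + ω₁) / 2| ^ (r / 2) ≤ Real.sqrt (|ω₁| ^ r + |ω₂| ^ r) := by
    calc |(ω₂ + ω₁) / 2| ^ (r / 2) ≤ (max |ω₁| |ω₂|) ^ (r / 2) :=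
        Real.rpow_le_rpow (abs_nonneg _) hM (by positivity)
    _ = Real.sqrt ((max |ω₁| |ω₂|) ^ r) := (my_hrw _ (by positivity)).symm
    _ ≤ Real.sqrt (|ω₁| ^ r + |ω₂| ^ r) := Real.sqrt_le_sqrt hMr
  have t2 : |(ω₂ - ω₁) / 2| ^ (r / 2) ≤ Real.sqrt (|ω₁ - ω₂| ^ r) := by
    have h5 : |(ω₂ - ω₁) / 2| ≤ |ω₁ - ω₂| := by
      rw [abs_div, abs_two, abs_sub_comm ω₂ ω₁, div_le_iff₀ (by norm_num : (0:ℝ) < 2)]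
      have := abs_nonneg (ω₁ - ω₂); linarith
    calc |(ω₂ - ω₁) / 2| ^ (r / 2) ≤ |ω₁ - ω₂| ^ (r / 2) :=
        Real.rpow_le_rpow (abs_nonneg _) h5 (by positivity)
    _ = Real.sqrt (|ω₁ - ω₂| ^ r) := (my_hrw _ (abs_nonneg _)).symm
  exact mul_le_mul t1 t2 (by positivity) (Real.sqrt_nonneg _)

lemma my_integrable (V : Measure ℝ)
    (hlevy : ∫⁻ a, ENNReal.ofReal (min 1 (a ^ 2)) ∂V < ⊤) (ω : ℝ) :
    Integrable (fun a => Real.cos (ω * a) - 1) V := by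
  have hcont : Continuous fun a : ℝ => Real.cos (ω * a) - 1 := by continuity
  refine ⟨hcont.aestronglyMeasurable, ?_⟩
  rw [hasFiniteIntegral_iff_norm]
  have hbound : ∀ a : ℝ, ‖Real.cos (ω * a) - 1‖ ≤ (2 + ω ^ 2) * min 1 (a ^ 2) := by
    intro a
    have h1 : Real.cos (ω * a) - 1 =
        -2 * Real.sin ((ω * a) / 2) * Real.sin ((ω * a) / 2) := by
      have := Real.cos_sub_cos (ω * a) 0
      simpa using this
    set s := Real.sin ((ω * a) / 2) with hs
    have hnorm : ‖Real.cos (ω * a) - 1‖ = 2 * s ^ 2 := by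
      rw [Real.norm_eq_abs, h1, abs_mul, abs_mul, mul_assoc, abs_mul_abs_self]
      norm_num [sq]
    have hs1 : s ^ 2 ≤ 1 := Real.sin_sq_le_one _
    have hs2 : s ^ 2 ≤ ((ω * a) / 2) ^ 2 := by
      have h := Real.abs_sin_le_abs (x := (ω * a) / 2)
      calc s ^ 2 = |s| ^ 2 := (sq_abs s).symm
      _ ≤ |(ω * a) / 2| ^ 2 := pow_le_pow_left₀ (abs_nonneg _) h 2
      _ = ((ω * a) / 2) ^ 2 := sq_abs _
    rw [hnorm]
    rcases le_or_gt (a ^ 2) 1 with h | h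
    · rw [min_eq_right h]
      nlinarith [sq_nonneg a, sq_nonneg ω, sq_nonneg (ω * a)]
    · rw [min_eq_left h.le]
      nlinarith [sq_nonneg ω]
  calc ∫⁻ a, ENNReal.ofReal ‖Real.cos (ω * a) - 1‖ ∂V
      ≤ ∫⁻ a, ENNReal.ofReal (2 + ω ^ 2) * ENNReal.ofReal (min 1 (a ^ 2)) ∂V := by
        refine lintegral_mono fun a => ?_
        rw [← ENNReal.ofReal_mul (by positivity)]
        exact ENNReal.ofReal_le_ofReal (hbound a)
    _ = ENNReal.ofReal (2 + ω ^ 2) * ∫⁻ a, ENNReal.ofReal (min 1 (a ^ 2)) ∂V :=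
        lintegral_const_mul' _ _ ENNReal.ofReal_ne_top
    _ < ⊤ := ENNReal.mul_lt_top ENNReal.ofReal_lt_top hlevy

theorem stmt9 (V : Measure ℝ) (p q : ℝ) (hp : 0 < p) (hpq : p ≤ q) (hq2 : q ≤ 2)
    (hsym : V.map (fun a => -a) = V) (h0 : V {0} = 0)
    (hlevy : ∫⁻ a, ENNReal.ofReal (min 1 (a ^ 2)) ∂V < ⊤)
    (hpinf : ∫⁻ a in {a : ℝ | 1 ≤ |a|}, ENNReal.ofReal (|a| ^ p) ∂V < ⊤)
    (hq0 : ∫⁻ a in {a : ℝ | |a| < 1}, ENNReal.ofReal (|a| ^ q) ∂V < ⊤) :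
    ∃ κ₁ κ₂ : ℝ, 0 ≤ κ₁ ∧ 0 ≤ κ₂ ∧
      ∀ ω₁ ω₂ : ℝ,
        |(∫ a, (Real.cos (ω₂ * a) - 1) ∂V) - ∫ a, (Real.cos (ω₁ * a) - 1) ∂V| ≤
          κ₁ * Real.sqrt ((|ω₁| ^ p + |ω₂| ^ p) * |ω₁ - ω₂| ^ p) +
            κ₂ * Real.sqrt ((|ω₁| ^ q + |ω₂| ^ q) * |ω₁ - ω₂| ^ q) := by
  have hp2 : p ≤ 2 := hpq.trans hq2
  have hq : 0 < q := hp.trans_le hpq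
  set S : Set ℝ := {a : ℝ | |a| < 1} with hSdef
  have hS : MeasurableSet S := (isOpen_lt continuous_abs continuous_const).measurableSet
  have hScompl : Sᶜ = {a : ℝ | 1 ≤ |a|} := by
    ext a; simp [hSdef, not_lt]
  set I₁ := ∫⁻ a in {a : ℝ | 1 ≤ |a|}, ENNReal.ofReal (|a| ^ p) ∂V with hI₁
  set I₂ := ∫⁻ a in {a : ℝ | |a| < 1}, ENNReal.ofReal (|a| ^ q) ∂V with hI₂
  refine ⟨2 * I₁.toReal, 2 * I₂.toReal, by positivity, by positivity, ?_⟩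
  intro ω₁ ω₂
  set Kp := Real.sqrt ((|ω₁| ^ p + |ω₂| ^ p) * |ω₁ - ω₂| ^ p) with hKp
  set Kq := Real.sqrt ((|ω₁| ^ q + |ω₂| ^ q) * |ω₁ - ω₂| ^ q) with hKq
  have hKp0 : 0 ≤ Kp := Real.sqrt_nonneg _
  have hKq0 : 0 ≤ Kq := Real.sqrt_nonneg _
  have hint₁ := my_integrable V hlevy ω₁
  have hint₂ := my_integrable V hlevy ω₂
  rw [← integral_sub hint₂ hint₁]
  have key : |∫ a, ((Real.cos (ω₂ * a) - 1) - (Real.cos (ω₁ * a) - 1)) ∂V| ≤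
      (∫⁻ a, ENNReal.ofReal |Real.cos (ω₂ * a) - Real.cos (ω₁ * a)| ∂V).toReal := by
    have h := norm_integral_le_lintegral_norm (μ := V)
      (fun a => (Real.cos (ω₂ * a) - 1) - (Real.cos (ω₁ * a) - 1))
    simpa [Real.norm_eq_abs, sub_sub_sub_cancel_right] using h
  set L := ∫⁻ a, ENNReal.ofReal |Real.cos (ω₂ * a) - Real.cos (ω₁ * a)| ∂V with hL
  have hmp : Measurable fun a : ℝ => ENNReal.ofReal (|a| ^ p) := by fun_prop
  have hmq : Measurable fun a : ℝ => ENNReal.ofReal (|a| ^ q) := by fun_prop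
  have boundS : ∫⁻ a in S, ENNReal.ofReal |Real.cos (ω₂ * a) - Real.cos (ω₁ * a)| ∂V ≤
      I₂ * ENNReal.ofReal (2 * Kq) := by
    calc ∫⁻ a in S, ENNReal.ofReal |Real.cos (ω₂ * a) - Real.cos (ω₁ * a)| ∂V
        ≤ ∫⁻ a in S, ENNReal.ofReal (|a| ^ q) * ENNReal.ofReal (2 * Kq) ∂V := by
          refine setLIntegral_mono (hmq.mul_const _) fun a _ => ?_
          rw [← ENNReal.ofReal_mul (by positivity)]
          exact ENNReal.ofReal_le_ofReal (my_key hq hq2 ω₁ ω₂ a)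
      _ = I₂ * ENNReal.ofReal (2 * Kq) := lintegral_mul_const _ hmq
  have boundC : ∫⁻ a in Sᶜ, ENNReal.ofReal |Real.cos (ω₂ * a) - Real.cos (ω₁ * a)| ∂V ≤
      I₁ * ENNReal.ofReal (2 * Kp) := by
    rw [hScompl]
    calc ∫⁻ a in {a : ℝ | 1 ≤ |a|}, ENNReal.ofReal |Real.cos (ω₂ * a) - Real.cos (ω₁ * a)| ∂V
        ≤ ∫⁻ a in {a : ℝ | 1 ≤ |a|}, ENNReal.ofReal (|a| ^ p) * ENNReal.ofReal (2 * Kp) ∂V := by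
          refine setLIntegral_mono (hmp.mul_const _) fun a _ => ?_
          rw [← ENNReal.ofReal_mul (by positivity)]
          exact ENNReal.ofReal_le_ofReal (my_key hp hp2 ω₁ ω₂ a)
      _ = I₁ * ENNReal.ofReal (2 * Kp) := lintegral_mul_const _ hmp
  have hLle : L ≤ I₂ * ENNReal.ofReal (2 * Kq) + I₁ * ENNReal.ofReal (2 * Kp) := by
    rw [hL, ← lintegral_add_compl _ hS]
    exact add_le_add boundS boundC
  have hfin : I₂ * ENNReal.ofReal (2 * Kq) + I₁ * ENNReal.ofReal (2 * Kp) ≠ ⊤ := by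
    apply ENNReal.add_ne_top.mpr
    constructor
    · exact ENNReal.mul_ne_top hq0.ne ENNReal.ofReal_ne_top
    · exact ENNReal.mul_ne_top hpinf.ne ENNReal.ofReal_ne_top
  have hLto : L.toReal ≤ I₂.toReal * (2 * Kq) + I₁.toReal * (2 * Kp) := by
    have := ENNReal.toReal_mono hfin hLle
    rwa [ENNReal.toReal_add (ENNReal.mul_ne_top hq0.ne ENNReal.ofReal_ne_top)
        (ENNReal.mul_ne_top hpinf.ne ENNReal.ofReal_ne_top),
      ENNReal.toReal_mul, ENNReal.toReal_mul,
      ENNReal.toReal_ofReal (by positivity), ENNReal.toReal_ofReal (by positivity)] at this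
  have := key.trans hLto
  linarith
end

section
/- Let 0 < p ≤ q ≤ 2 and let g: ℝ → ℂ be a function with g(0) = 0 satisfying |g(ω₂) - g(ω₁)| ≤ κ₁ h_p(ω₁,ω₂) + κ₂ h_q(ω₁,ω₂) for all ω₁, ω₂, where h_r(x,y) = sqrt((|x|^r+|y|^r)|x-y|^r). Then the functional G(φ) = ∫_{ℝ^d} g(φ(r)) dr is well-defined on L^p ∩ L^q and satisfies |G(φ) - G(ψ)| ≤ κ₁ H_p(φ,ψ) + κ₂ H_q(φ,ψ), where H_r(φ,ψ) = sqrt((‖φ‖_r^r+‖ψ‖_r^r)‖φ-ψ‖_r^r). In particular G is continuous on L^p ∩ L^q. -/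
/-!
Pointwise, `‖g(φ r) - g(ψ r)‖ ≤ κ₁ h_p(ψ r, φ r) + κ₂ h_q(ψ r, φ r)`, and Cauchy–Schwarz in the form
`∫ √(u v) ≤ √(∫ u · ∫ v)` turns `∫ h_r(φ, ψ)` into `H_r(φ, ψ)`. Integrability of `g ∘ φ` comes from
the growth bound `‖g ω‖ ≤ κ₁ |ω|^p + κ₂ |ω|^q`, which is the hypothesis at `ω₁ = 0`.
-/

open MeasureTheory

lemma Real.sqrt_mul_le_add {a b : ℝ} (ha : 0 ≤ a) (hb : 0 ≤ b) : √(a * b) ≤ a + b :=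
  Real.sqrt_le_iff.2 ⟨add_nonneg ha hb, by nlinarith⟩

section CauchySchwarz

variable {α : Type*} [MeasurableSpace α] {μ : Measure α} {u v : α → ℝ}

lemma integrable_sqrt_mul (hu : Integrable u μ) (hv : Integrable v μ)
    (hu0 : 0 ≤ᵐ[μ] u) (hv0 : 0 ≤ᵐ[μ] v) : Integrable (fun x => √(u x * v x)) μ := by
  refine (hu.add hv).mono' (Real.continuous_sqrt.comp_aestronglyMeasurable (hu.1.mul hv.1)) ?_
  filter_upwards [hu0, hv0] with x hux hvx
  rw [Real.norm_of_nonneg (Real.sqrt_nonneg _)]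
  exact Real.sqrt_mul_le_add hux hvx

lemma memLp_two_sqrt (hu : Integrable u μ) (hu0 : 0 ≤ᵐ[μ] u) :
    MemLp (fun x => √(u x)) (ENNReal.ofReal 2) μ := by
  rw [ENNReal.ofReal_ofNat, memLp_two_iff_integrable_sq
    (Real.continuous_sqrt.comp_aestronglyMeasurable hu.1)]
  refine hu.congr ?_
  filter_upwards [hu0] with x hx using (Real.sq_sqrt hx).symm

lemma integral_sqrt_rpow_two (hu0 : 0 ≤ᵐ[μ] u) :
    ∫ x, √(u x) ^ (2 : ℝ) ∂μ = ∫ x, u x ∂μ := by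
  refine integral_congr_ae ?_
  filter_upwards [hu0] with x hx
  rw [Real.rpow_two, Real.sq_sqrt hx]

lemma integral_sqrt_mul_le (hu : Integrable u μ) (hv : Integrable v μ)
    (hu0 : 0 ≤ᵐ[μ] u) (hv0 : 0 ≤ᵐ[μ] v) :
    ∫ x, √(u x * v x) ∂μ ≤ √((∫ x, u x ∂μ) * ∫ x, v x ∂μ) :=
  calc ∫ x, √(u x * v x) ∂μ = ∫ x, √(u x) * √(v x) ∂μ := by
        refine integral_congr_ae ?_
        filter_upwards [hu0] with x hx using Real.sqrt_mul hx _
    _ ≤ (∫ x, √(u x) ^ (2 : ℝ) ∂μ) ^ (1 / 2 : ℝ) * (∫ x, √(v x) ^ (2 : ℝ) ∂μ) ^ (1 / 2 : ℝ) :=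
        integral_mul_le_Lp_mul_Lq_of_nonneg Real.HolderConjugate.two_two
          (Filter.Eventually.of_forall fun _ => Real.sqrt_nonneg _)
          (Filter.Eventually.of_forall fun _ => Real.sqrt_nonneg _)
          (memLp_two_sqrt hu hu0) (memLp_two_sqrt hv hv0)
    _ = √((∫ x, u x ∂μ) * ∫ x, v x ∂μ) := by
        rw [integral_sqrt_rpow_two hu0, integral_sqrt_rpow_two hv0,
          Real.sqrt_mul (integral_nonneg_of_ae hu0), Real.sqrt_eq_rpow, Real.sqrt_eq_rpow]

end CauchySchwarz

section RpowGap

variable {α : Type*} [MeasurableSpace α] {μ : Measure α} {r : ℝ} {φ ψ : α → ℝ}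

lemma integrable_abs_sub_rpow_s10 (hr : 0 < r) (hφ : AEStronglyMeasurable φ μ)
    (hψ : AEStronglyMeasurable ψ μ) (hφr : Integrable (fun x => |φ x| ^ r) μ)
    (hψr : Integrable (fun x => |ψ x| ^ r) μ) : Integrable (fun x => |φ x - ψ x| ^ r) μ := by
  have hr0 : ENNReal.ofReal r ≠ 0 := ENNReal.ofReal_ne_zero_iff.2 hr
  have hLp : ∀ {f : α → ℝ}, AEStronglyMeasurable f μ →
      (Integrable (fun x => |f x| ^ r) μ ↔ MemLp f (ENNReal.ofReal r) μ) := fun hf => by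
    simpa [ENNReal.toReal_ofReal hr.le] using
      integrable_norm_rpow_iff hf hr0 ENNReal.ofReal_ne_top
  exact (hLp (hφ.sub hψ)).2 (((hLp hφ).1 hφr).sub ((hLp hψ).1 hψr))

variable (hr : 0 < r) (hφ : AEStronglyMeasurable φ μ) (hψ : AEStronglyMeasurable ψ μ)
  (hφr : Integrable (fun x => |φ x| ^ r) μ) (hψr : Integrable (fun x => |ψ x| ^ r) μ)
include hr hφ hψ hφr hψr

lemma integrable_sqrt_add_rpow_mul_sub_rpow :
    Integrable (fun x => √((|φ x| ^ r + |ψ x| ^ r) * |φ x - ψ x| ^ r)) μ :=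
  integrable_sqrt_mul (hφr.add hψr) (integrable_abs_sub_rpow_s10 hr hφ hψ hφr hψr)
    (Filter.Eventually.of_forall fun _ => by positivity)
    (Filter.Eventually.of_forall fun _ => by positivity)

lemma integral_sqrt_add_rpow_mul_sub_rpow_le :
    ∫ x, √((|φ x| ^ r + |ψ x| ^ r) * |φ x - ψ x| ^ r) ∂μ ≤
      √(((∫ x, |φ x| ^ r ∂μ) + ∫ x, |ψ x| ^ r ∂μ) * ∫ x, |φ x - ψ x| ^ r ∂μ) := by
  rw [← integral_add hφr hψr]
  exact integral_sqrt_mul_le (hφr.add hψr) (integrable_abs_sub_rpow_s10 hr hφ hψ hφr hψr)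
    (Filter.Eventually.of_forall fun _ => by positivity)
    (Filter.Eventually.of_forall fun _ => by positivity)

end RpowGap

section GrowthBound

variable {E : Type*} [NormedAddCommGroup E] {p q κ₁ κ₂ : ℝ} {g : ℝ → E}

lemma norm_le_rpow_of_norm_sub_le (hp : 0 < p) (hq : 0 < q) (hg0 : g 0 = 0)
    (hglip : ∀ ω₁ ω₂ : ℝ, ‖g ω₂ - g ω₁‖ ≤
      κ₁ * √((|ω₁| ^ p + |ω₂| ^ p) * |ω₁ - ω₂| ^ p) +
        κ₂ * √((|ω₁| ^ q + |ω₂| ^ q) * |ω₁ - ω₂| ^ q)) (ω : ℝ) :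
    ‖g ω‖ ≤ κ₁ * |ω| ^ p + κ₂ * |ω| ^ q := by
  simpa [hg0, Real.zero_rpow hp.ne', Real.zero_rpow hq.ne',
    Real.sqrt_mul_self (Real.rpow_nonneg (abs_nonneg ω) _)] using hglip 0 ω

lemma integrable_of_norm_le_rpow_add_rpow {α : Type*} [MeasurableSpace α] {μ : Measure α}
    {φ : α → ℝ} (hgb : ∀ ω, ‖g ω‖ ≤ κ₁ * |ω| ^ p + κ₂ * |ω| ^ q)
    (hgφ : AEStronglyMeasurable (fun x => g (φ x)) μ)
    (hφp : Integrable (fun x => |φ x| ^ p) μ) (hφq : Integrable (fun x => |φ x| ^ q) μ) :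
    Integrable (fun x => g (φ x)) μ :=
  ((hφp.const_mul κ₁).add (hφq.const_mul κ₂)).mono' hgφ
    (Filter.Eventually.of_forall fun x => hgb (φ x))

end GrowthBound

theorem stmt10_general (d : ℕ) (p q κ₁ κ₂ : ℝ) (hp : 0 < p) (hpq : p ≤ q)
    (hκ₁ : 0 ≤ κ₁) (hκ₂ : 0 ≤ κ₂)
    (g : ℝ → ℂ) (hgm : Measurable g) (hg0 : g 0 = 0)
    (hglip : ∀ ω₁ ω₂ : ℝ,
      ‖g ω₂ - g ω₁‖ ≤
        κ₁ * Real.sqrt ((|ω₁| ^ p + |ω₂| ^ p) * |ω₁ - ω₂| ^ p) +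
          κ₂ * Real.sqrt ((|ω₁| ^ q + |ω₂| ^ q) * |ω₁ - ω₂| ^ q))
    (φ ψ : EuclideanSpace ℝ (Fin d) → ℝ) (hφ : Measurable φ) (hψ : Measurable ψ)
    (hφp : Integrable (fun r => |φ r| ^ p)) (hφq : Integrable (fun r => |φ r| ^ q))
    (hψp : Integrable (fun r => |ψ r| ^ p)) (hψq : Integrable (fun r => |ψ r| ^ q)) :
    Integrable (fun r => g (φ r)) ∧
      ‖(∫ r, g (φ r)) - ∫ r, g (ψ r)‖ ≤
        κ₁ * Real.sqrt ((((∫ r, |φ r| ^ p) + ∫ r, |ψ r| ^ p)) * ∫ r, |φ r - ψ r| ^ p) +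
          κ₂ * Real.sqrt ((((∫ r, |φ r| ^ q) + ∫ r, |ψ r| ^ q)) * ∫ r, |φ r - ψ r| ^ q) := by
  have hq : 0 < q := hp.trans_le hpq
  have hgb := norm_le_rpow_of_norm_sub_le hp hq hg0 hglip
  have hgφ := integrable_of_norm_le_rpow_add_rpow hgb (hgm.comp hφ).aestronglyMeasurable hφp hφq
  have hgψ := integrable_of_norm_le_rpow_add_rpow hgb (hgm.comp hψ).aestronglyMeasurable hψp hψq
  have hIp := integrable_sqrt_add_rpow_mul_sub_rpow hp hφ.aestronglyMeasurable
    hψ.aestronglyMeasurable hφp hψp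
  have hIq := integrable_sqrt_add_rpow_mul_sub_rpow hq hφ.aestronglyMeasurable
    hψ.aestronglyMeasurable hφq hψq
  refine ⟨hgφ, ?_⟩
  calc ‖(∫ r, g (φ r)) - ∫ r, g (ψ r)‖ = ‖∫ r, (g (φ r) - g (ψ r))‖ := by
        rw [integral_sub hgφ hgψ]
    _ ≤ ∫ r, ‖g (φ r) - g (ψ r)‖ := norm_integral_le_integral_norm _
    _ ≤ ∫ r, (κ₁ * √((|φ r| ^ p + |ψ r| ^ p) * |φ r - ψ r| ^ p) +
          κ₂ * √((|φ r| ^ q + |ψ r| ^ q) * |φ r - ψ r| ^ q)) := by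
        refine integral_mono (hgφ.sub hgψ).norm ((hIp.const_mul κ₁).add (hIq.const_mul κ₂))
          fun r => ?_
        rw [add_comm (|φ r| ^ p), add_comm (|φ r| ^ q), abs_sub_comm (φ r)]
        exact hglip (ψ r) (φ r)
    _ = κ₁ * (∫ r, √((|φ r| ^ p + |ψ r| ^ p) * |φ r - ψ r| ^ p)) +
          κ₂ * ∫ r, √((|φ r| ^ q + |ψ r| ^ q) * |φ r - ψ r| ^ q) := by
        rw [integral_add (hIp.const_mul κ₁) (hIq.const_mul κ₂), integral_const_mul,
          integral_const_mul]
    _ ≤ _ := by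
        gcongr
        · exact integral_sqrt_add_rpow_mul_sub_rpow_le hp hφ.aestronglyMeasurable
            hψ.aestronglyMeasurable hφp hψp
        · exact integral_sqrt_add_rpow_mul_sub_rpow_le hq hφ.aestronglyMeasurable
            hψ.aestronglyMeasurable hφq hψq

theorem stmt10 (d : ℕ) (p q κ₁ κ₂ : ℝ) (hp : 0 < p) (hpq : p ≤ q) (hq2 : q ≤ 2)
    (hκ₁ : 0 ≤ κ₁) (hκ₂ : 0 ≤ κ₂)
    (g : ℝ → ℂ) (hgm : Measurable g) (hg0 : g 0 = 0)
    (hglip : ∀ ω₁ ω₂ : ℝ,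
      ‖g ω₂ - g ω₁‖ ≤
        κ₁ * Real.sqrt ((|ω₁| ^ p + |ω₂| ^ p) * |ω₁ - ω₂| ^ p) +
          κ₂ * Real.sqrt ((|ω₁| ^ q + |ω₂| ^ q) * |ω₁ - ω₂| ^ q))
    (φ ψ : EuclideanSpace ℝ (Fin d) → ℝ) (hφ : Measurable φ) (hψ : Measurable ψ)
    (hφp : Integrable (fun r => |φ r| ^ p)) (hφq : Integrable (fun r => |φ r| ^ q))
    (hψp : Integrable (fun r => |ψ r| ^ p)) (hψq : Integrable (fun r => |ψ r| ^ q)) :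
    Integrable (fun r => g (φ r)) ∧
      ‖(∫ r, g (φ r)) - ∫ r, g (ψ r)‖ ≤
        κ₁ * Real.sqrt ((((∫ r, |φ r| ^ p) + ∫ r, |ψ r| ^ p)) * ∫ r, |φ r - ψ r| ^ p) +
          κ₂ * Real.sqrt ((((∫ r, |φ r| ^ q) + ∫ r, |ψ r| ^ q)) * ∫ r, |φ r - ψ r| ^ q) :=
  stmt10_general d p q κ₁ κ₂ hp hpq hκ₁ hκ₂ g hgm hg0 hglip φ ψ hφ hψ hφp hφq hψp hψq
end

section
/- Let u ∈ ℝ^d, ‖u‖₂ = 1, and define for φ ∈ 𝒮(ℝ^d): J_u^* φ(r) = ∫_{⟨r,u⟩}^∞ φ(p_{u⊥}(r) + τu) dτ if ⟨r,u⟩ ≥ 0, and J_u^* φ(r) = -∫_{-∞}^{⟨r,u⟩} φ(p_{u⊥}(r) + τu) dτ if ⟨r,u⟩ < 0, where p_{u⊥}(r) = r - ⟨r,u⟩u. Then for every α > 1 there is a constant C_α such that for all φ with ‖φ‖_{∞,α} := sup_r (1+‖r‖₂^α)|φ(r)| < ∞, one has ‖J_u^* φ‖_{∞,α-1} ≤ C_α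 ‖φ‖_{∞,α}. -/
open MeasureTheory

noncomputable def Jstar (d : ℕ) (u : EuclideanSpace ℝ (Fin d))
    (φ : EuclideanSpace ℝ (Fin d) → ℝ) (r : EuclideanSpace ℝ (Fin d)) : ℝ :=
  if 0 ≤ (inner ℝ r u : ℝ) then
    ∫ τ in Set.Ioi (inner ℝ r u : ℝ), φ (r - (inner ℝ r u : ℝ) • u + τ • u)
  else
    -∫ τ in Set.Iio (inner ℝ r u : ℝ), φ (r - (inner ℝ r u : ℝ) • u + τ • u)

open Set Real

/-!
Write `r = p + s • u` with `s = ⟪r, u⟫` and `p ⊥ u`. On the line `τ ↦ p + τ • u` one has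
`‖p + τ • u‖ ≥ max ‖p‖ |τ|`, so the weighted bound on `φ` gives
`|φ (p + τ • u)| ≤ 3 ^ α M (1 + ‖p‖ + |τ|) ^ (-α)`. In both cases of its definition `J*_u φ (r)`
only integrates over `|τ| > |s|`, hence `|J*_u φ (r)| ≤ 3 ^ α M (1 + ‖p‖ + |s|) ^ (1 - α) / (α - 1)`,
and `‖r‖ ≤ ‖p‖ + |s|` turns the power `1 - α` into the weight `1 + ‖r‖ ^ (α - 1)`.
-/

lemma setIntegral_Ioi_comp_const_add {E : Type*} [NormedAddCommGroup E] [NormedSpace ℝ E]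
    (f : ℝ → E) (c s : ℝ) : ∫ τ in Ioi s, f (c + τ) = ∫ t in Ioi (c + s), f t := by
  have h := (measurePreserving_add_left volume c).setIntegral_preimage_emb
    (measurableEmbedding_addLeft c) f (Ioi (c + s))
  rwa [preimage_const_add_Ioi, add_sub_cancel_left] at h

lemma integrableOn_Ioi_comp_const_add_iff {E : Type*} [NormedAddCommGroup E] {f : ℝ → E}
    (c s : ℝ) : IntegrableOn (fun τ => f (c + τ)) (Ioi s) ↔ IntegrableOn f (Ioi (c + s)) := by
  have h := (measurePreserving_add_left volume c).integrableOn_comp_preimage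
    (measurableEmbedding_addLeft c) (f := f) (s := Ioi (c + s))
  rwa [preimage_const_add_Ioi, add_sub_cancel_left] at h

section ShiftedPower

variable {c s α : ℝ}

lemma integrableOn_Ioi_add_rpow_neg (hcs : 0 < c + s) (hα : 1 < α) :
    IntegrableOn (fun τ => (c + τ) ^ (-α)) (Ioi s) :=
  (integrableOn_Ioi_comp_const_add_iff c s).2 (integrableOn_Ioi_rpow_of_lt (by linarith) hcs)

lemma integral_Ioi_add_rpow_neg (hcs : 0 < c + s) (hα : 1 < α) :
    ∫ τ in Ioi s, (c + τ) ^ (-α) = (c + s) ^ (1 - α) / (α - 1) := by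
  rw [setIntegral_Ioi_comp_const_add (· ^ (-α)), integral_Ioi_rpow_of_lt (by linarith) hcs,
    neg_add_eq_sub, ← neg_sub α 1, div_neg, neg_div, neg_neg]

end ShiftedPower

lemma one_add_add_rpow_le {a b y α : ℝ} (ha : 0 ≤ a) (hb : 0 ≤ b) (hy : max a b ≤ y)
    (hα : 0 ≤ α) : (1 + a + b) ^ α ≤ 3 ^ α * (1 + y ^ α) := by
  have hy0 : 0 ≤ y := ha.trans ((le_max_left a b).trans hy)
  have h3 : 1 + a + b ≤ 3 * max 1 y := by
    linarith [le_max_left 1 y, le_max_right 1 y, le_max_left a b, le_max_right a b]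
  calc (1 + a + b) ^ α ≤ (3 * max 1 y) ^ α := by gcongr
    _ = 3 ^ α * max 1 (y ^ α) := by
      rw [mul_rpow (by norm_num) (le_max_of_le_left zero_le_one), rpow_max zero_le_one hy0 hα,
        one_rpow]
    _ ≤ 3 ^ α * (1 + y ^ α) := by
      gcongr
      exact max_le (le_add_of_nonneg_right (by positivity)) (le_add_of_nonneg_left zero_le_one)

lemma one_add_rpow_le_two_mul_rpow {x L β : ℝ} (hx : 0 ≤ x) (hxL : x ≤ L) (hL : 1 ≤ L)
    (hβ : 0 ≤ β) : 1 + x ^ β ≤ 2 * L ^ β := by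
  linarith [one_le_rpow hL hβ, rpow_le_rpow hx hxL hβ]

section InnerProductSpace

variable {E : Type*} [NormedAddCommGroup E] [InnerProductSpace ℝ E] {u : E}

lemma inner_sub_inner_smul_self (hu : ‖u‖ = 1) (r : E) : inner ℝ (r - inner ℝ r u • u) u = 0 := by
  rw [inner_sub_left, real_inner_smul_left, real_inner_self_eq_norm_sq, hu]
  ring

lemma max_norm_abs_le_norm_add_smul (hu : ‖u‖ = 1) {p : E} (hpu : inner ℝ p u = 0) (τ : ℝ) :
    max ‖p‖ |τ| ≤ ‖p + τ • u‖ := by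
  have h := norm_add_sq_eq_norm_sq_add_norm_sq_real (x := p) (y := τ • u)
    (by rw [real_inner_smul_right, hpu, mul_zero])
  rw [norm_smul, hu, mul_one, norm_eq_abs] at h
  refine max_le ((mul_self_le_mul_self_iff (norm_nonneg _) (norm_nonneg _)).2 ?_)
    ((mul_self_le_mul_self_iff (abs_nonneg _) (norm_nonneg _)).2 ?_) <;> rw [h]
  · exact le_add_of_nonneg_right (mul_self_nonneg _)
  · exact le_add_of_nonneg_left (mul_self_nonneg _)

lemma abs_apply_add_smul_le {φ : E → ℝ} {M α : ℝ} (hα : 0 ≤ α)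
    (hφ : ∀ x, (1 + ‖x‖ ^ α) * |φ x| ≤ M) (hu : ‖u‖ = 1) {p : E} (hpu : inner ℝ p u = 0) (τ : ℝ) :
    |φ (p + τ • u)| ≤ 3 ^ α * M * (1 + ‖p‖ + |τ|) ^ (-α) := by
  have hL : 0 < 1 + ‖p‖ + |τ| := by positivity
  rw [rpow_neg hL.le, ← div_eq_mul_inv, le_div_iff₀ (by positivity), mul_comm]
  calc (1 + ‖p‖ + |τ|) ^ α * |φ (p + τ • u)|
      ≤ 3 ^ α * (1 + ‖p + τ • u‖ ^ α) * |φ (p + τ • u)| := by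
        gcongr
        exact one_add_add_rpow_le (norm_nonneg _) (abs_nonneg _)
          (max_norm_abs_le_norm_add_smul hu hpu τ) hα
    _ ≤ 3 ^ α * M := by
        rw [mul_assoc]
        exact mul_le_mul_of_nonneg_left (hφ _) (by positivity)

end InnerProductSpace

lemma abs_Jstar_le {d : ℕ} {u r : EuclideanSpace ℝ (Fin d)} {φ : EuclideanSpace ℝ (Fin d) → ℝ}
    {g : ℝ → ℝ}
    (hg : IntegrableOn g (Ioi |inner ℝ r u|))
    (hφ : ∀ τ, |inner ℝ r u| < |τ| → |φ (r - inner ℝ r u • u + τ • u)| ≤ g |τ|) :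
    |Jstar d u φ r| ≤ ∫ τ in Ioi |inner ℝ r u|, g τ := by
  set s := inner ℝ r u
  have bound : ∀ f : ℝ → ℝ, (∀ τ ∈ Ioi |s|, |f τ| ≤ g τ) →
      |∫ τ in Ioi |s|, f τ| ≤ ∫ τ in Ioi |s|, g τ := fun f hf =>
    norm_integral_le_of_norm_le hg ((ae_restrict_iff' measurableSet_Ioi).2 (.of_forall hf) :
      ∀ᵐ τ ∂volume.restrict (Ioi |s|), ‖f τ‖ ≤ g τ)
  rw [Jstar]
  split_ifs with hs
  · rw [abs_of_nonneg hs] at bound hφ ⊢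
    refine bound _ fun τ hτ => ?_
    have hτ : s < τ := hτ
    simpa only [abs_of_pos (hs.trans_lt hτ)] using hφ τ (by rwa [abs_of_pos (hs.trans_lt hτ)])
  · rw [not_le] at hs
    rw [abs_of_neg hs] at bound hφ ⊢
    have hflip : ∫ τ in Iio s, φ (r - s • u + τ • u) = ∫ τ in Ioi (-s), φ (r - s • u + (-τ) • u) := by
      rw [← integral_Iic_eq_integral_Iio, integral_comp_neg_Ioi (-s) fun τ => φ (r - s • u + τ • u),
        neg_neg]
    rw [abs_neg, hflip]
    refine bound _ fun τ hτ => ?_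
    have hτ : -s < τ := hτ
    have habs : |-τ| = τ := by rw [abs_neg, abs_of_pos (by linarith)]
    simpa only [habs] using hφ (-τ) (by rwa [habs])

theorem stmt14 (d : ℕ) (u : EuclideanSpace ℝ (Fin d)) (hu : ‖u‖ = 1)
    (α : ℝ) (hα : 1 < α) :
    ∃ C : ℝ, 0 < C ∧
      ∀ (φ : EuclideanSpace ℝ (Fin d) → ℝ), Continuous φ →
        ∀ M : ℝ, (∀ r, (1 + ‖r‖ ^ α) * |φ r| ≤ M) →
          ∀ r, (1 + ‖r‖ ^ (α - 1)) * |Jstar d u φ r| ≤ C * M := by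
  have hα1 : 0 < α - 1 := sub_pos.2 hα
  refine ⟨2 * 3 ^ α / (α - 1), by positivity, fun φ _ M hφ r => ?_⟩
  set s := inner ℝ r u
  set p := r - s • u
  set L := 1 + ‖p‖ + |s|
  have hL : 1 ≤ L := by simp only [L]; linarith [norm_nonneg p, abs_nonneg s]
  have hJ : |Jstar d u φ r| ≤ 3 ^ α * M * (L ^ (1 - α) / (α - 1)) := calc
    |Jstar d u φ r| ≤ ∫ τ in Ioi |s|, 3 ^ α * M * (1 + ‖p‖ + τ) ^ (-α) :=
      abs_Jstar_le ((integrableOn_Ioi_add_rpow_neg (by positivity) hα).const_mul _) fun τ _ =>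
        abs_apply_add_smul_le (by linarith) hφ hu (inner_sub_inner_smul_self hu r) τ
    _ = 3 ^ α * M * (L ^ (1 - α) / (α - 1)) := by
      rw [integral_const_mul, integral_Ioi_add_rpow_neg (by positivity) hα]
  have hrL : ‖r‖ ≤ L := calc
    ‖r‖ ≤ ‖p‖ + ‖s • u‖ := norm_le_norm_sub_add r (s • u)
    _ ≤ L := by rw [norm_smul, hu, mul_one, norm_eq_abs]; linarith
  calc (1 + ‖r‖ ^ (α - 1)) * |Jstar d u φ r|
      ≤ 2 * L ^ (α - 1) * (3 ^ α * M * (L ^ (1 - α) / (α - 1))) :=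
        mul_le_mul (one_add_rpow_le_two_mul_rpow (norm_nonneg r) hrL hL hα1.le) hJ
          (abs_nonneg _) (by positivity)
    _ = 2 * 3 ^ α / (α - 1) * M := by
      rw [← neg_sub α 1, rpow_neg (by positivity)]
      field_simp
end
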